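/- Let $W$ be a vector subspace of the space of affine-linear functions $L : \{-1,1\}^n \to \mathbb{R}$ (functions of the form $L(x) = c_0 + \sum_i c_i x_i$). Then the probability, over a uniformly random $x \in \{-1,1\}^n$, that $L(x) = 0$ for all $L \in W$ is at most $2^{-\dim(W)}$. -/
import Mathlib

open Finset

/-- The point of the cube `{-1,1}^n` corresponding to `x : Fin n → Bool`. -/
def pm {n : ℕ} (x : Fin n → Bool) (i : Fin n) : ℝ := if x i then 1 else -1

/-- Probability of an event under the uniform distribution on `{-1,1}^n`. -/
noncomputable def probOf (n : ℕ) (P : (Fin n → Bool) → Prop) : ℝ :=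
  ((@Finset.filter _ P (Classical.decPred P) Finset.univ).card : ℝ) / 2 ^ n

lemma exists_coords {M : Type*} [AddCommGroup M] [Module ℝ M] [FiniteDimensional ℝ M]
    {ι : Type*} (g : ι → (M →ₗ[ℝ] ℝ)) :
    ∀ (d : ℕ) (V : Submodule ℝ M), Module.finrank ℝ V ≤ d →
      (∀ v ∈ V, (∀ i, g i v = 0) → v = 0) →
      ∃ S : Finset ι, S.card ≤ Module.finrank ℝ V ∧
        ∀ v ∈ V, (∀ i ∈ S, g i v = 0) → v = 0 := by
  classical
  intro d
  induction d with
  | zero =>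
    intro V hd _
    refine ⟨∅, by simp, ?_⟩
    intro v hv _
    have : V = ⊥ := Submodule.finrank_eq_zero.mp (Nat.le_zero.mp hd)
    simpa [this] using hv
  | succ d ih =>
    intro V hd h
    by_cases hbot : V = ⊥
    · refine ⟨∅, by simp, ?_⟩
      intro v hv _
      simpa [hbot] using hv
    · obtain ⟨v0, hv0V, hv0⟩ := Submodule.exists_mem_ne_zero_of_ne_bot hbot
      have : ∃ i, g i v0 ≠ 0 := by
        by_contra hcon
        push_neg at hcon
        exact hv0 (h v0 hv0V hcon)
      obtain ⟨i, hi⟩ := this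
      set V' : Submodule ℝ M := V ⊓ LinearMap.ker (g i) with hV'
      have hlt : V' < V := by
        refine lt_of_le_of_ne inf_le_left ?_
        intro he
        rw [he] at hV'
        have : v0 ∈ LinearMap.ker (g i) := by
          have := hv0V
          rw [hV'] at this
          exact this.2
        exact hi this
      have hfr : Module.finrank ℝ V' < Module.finrank ℝ V :=
        Submodule.finrank_lt_finrank_of_lt hlt
      obtain ⟨S', hS'c, hS'⟩ := ih V' (by omega)
        (fun v hv hz => h v hv.1 hz)
      refine ⟨insert i S', ?_, ?_⟩
      · calc (insert i S').card ≤ S'.card + 1 := Finset.card_insert_le _ _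
          _ ≤ Module.finrank ℝ V' + 1 := by omega
          _ ≤ Module.finrank ℝ V := by omega
      · intro v hv hz
        have hvi : g i v = 0 := hz i (Finset.mem_insert_self _ _)
        exact hS' v ⟨hv, hvi⟩ (fun j hj => hz j (Finset.mem_insert_of_mem hj))


noncomputable def psi (n : ℕ) : (ℝ × (Fin n → ℝ)) →ₗ[ℝ] ((Fin n → Bool) → ℝ) where
  toFun p := fun x => p.1 + ∑ i, p.2 i * pm x i
  map_add' p q := by
    funext x
    simp [add_mul, Finset.sum_add_distrib]
    ring
  map_smul' r p := by
    funext x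
    simp only [Prod.smul_fst, Prod.smul_snd, smul_eq_mul, Pi.smul_apply,
      RingHom.id_apply]
    rw [mul_add, Finset.mul_sum]
    congr 1
    exact Finset.sum_congr rfl (fun i _ => by ring)

lemma pm_inj {n : ℕ} {x y : Fin n → Bool} (h : pm x = pm y) : x = y := by
  funext i
  have := congrFun h i
  unfold pm at this
  cases hx : x i <;> cases hy : y i <;> simp [hx, hy] at this ⊢ <;> norm_num at this

lemma psi_inj (n : ℕ) : Function.Injective (psi n) := by
  rw [injective_iff_map_eq_zero]
  intro p hp
  classical
  have key : ∀ i, p.2 i = 0 := by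
    intro i
    have h1 := congrFun hp (fun _ => true)
    have h2 := congrFun hp (fun j => j ≠ i)
    simp only [psi, LinearMap.coe_mk, AddHom.coe_mk, Pi.zero_apply] at h1 h2
    have hdiff : (∑ j, p.2 j * pm (fun _ => true) j) - (∑ j, p.2 j * pm (fun j => j ≠ i) j)
        = 2 * p.2 i := by
      rw [← Finset.sum_sub_distrib]
      have : ∀ j ∈ Finset.univ, p.2 j * pm (fun _ => true) j - p.2 j * pm (fun j => j ≠ i) j
          = if j = i then 2 * p.2 i else 0 := by
        intro j _
        by_cases hji : j = i <;> simp [pm, hji] <;> ring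
      rw [Finset.sum_congr rfl this, Finset.sum_ite_eq' Finset.univ i (fun _ => 2 * p.2 i)]
      simp
    have : (2 : ℝ) * p.2 i = 0 := by linarith
    linarith
  have h1 := congrFun hp (fun _ => true)
  simp only [psi, LinearMap.coe_mk, AddHom.coe_mk, Pi.zero_apply] at h1
  have hsum : (∑ j, p.2 j * pm (fun _ => true) j) = 0 := by
    apply Finset.sum_eq_zero
    intro j _
    simp [key j]
  have hp1 : p.1 = 0 := by linarith
  exact Prod.ext hp1 (funext key)

/-- If `W` is a subspace of affine-linear functions on `{-1,1}^n`, then the probability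
that a uniform random point is a common zero of `W` is at most `2^{-dim W}`. -/
theorem stmt1 (n : ℕ) (W : Submodule ℝ ((Fin n → Bool) → ℝ))
    (haff : ∀ L ∈ W, ∃ (c0 : ℝ) (c : Fin n → ℝ), ∀ x, L x = c0 + ∑ i, c i * pm x i) :
    probOf n (fun x => ∀ L ∈ W, L x = 0) ≤ (2 : ℝ) ^ (-(Module.finrank ℝ W : ℤ)) := by
  classical
  set d := Module.finrank ℝ W with hd
  set P : (Fin n → Bool) → Prop := fun x => ∀ L ∈ W, L x = 0 with hP
  set F := @Finset.filter _ P (Classical.decPred P) Finset.univ with hF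
  have hbound : (0:ℝ) < (2 : ℝ) ^ (-(d : ℤ)) := by positivity
  have hWr : W ≤ LinearMap.range (psi n) := by
    intro L hL
    obtain ⟨c0, c, hc⟩ := haff L hL
    exact ⟨(c0, c), by funext x; exact (hc x).symm⟩
  set U := W.comap (psi n) with hU
  have hmap : U.map (psi n) = W := Submodule.map_comap_eq_self hWr
  have hUd : Module.finrank ℝ U = d := by
    rw [hd, ← hmap]
    exact (Submodule.equivMapOfInjective _ (psi_inj n) U).finrank_eq
  by_cases hconst : ∃ c0 : ℝ, c0 ≠ 0 ∧ ((c0, 0) : ℝ × (Fin n → ℝ)) ∈ U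
  · obtain ⟨c0, hc0, hmem⟩ := hconst
    have hempty : ∀ x, ¬ P x := by
      intro x hx
      have hW : psi n (c0, 0) ∈ W := hmem
      have h0 := hx _ hW
      simp only [psi, LinearMap.coe_mk, AddHom.coe_mk, Pi.zero_apply, zero_mul,
        Finset.sum_const_zero, add_zero] at h0
      exact hc0 h0
    have : F = ∅ := by
      rw [hF, Finset.filter_eq_empty_iff]
      exact fun {x} _ => hempty x
    unfold probOf
    rw [← hF, this]
    simp only [Finset.card_empty, Nat.cast_zero, zero_div]
    exact le_of_lt hbound
  · push_neg at hconst
    have hU0 : ∀ p ∈ U, (∀ i, (fun i => (LinearMap.proj i : (Fin n → ℝ) →ₗ[ℝ] ℝ).comp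
        (LinearMap.snd ℝ ℝ (Fin n → ℝ))) i p = 0) → p = 0 := by
      intro p hp hz
      have hp2 : p.2 = 0 := funext fun i => hz i
      have hp1 : p.1 = 0 := by
        by_contra hne
        exact hconst p.1 hne (by rw [← Prod.mk.eta (p := p), hp2] at hp; exact hp)
      exact Prod.ext hp1 hp2
    obtain ⟨S, hScard, hS⟩ := exists_coords _ d U (le_of_eq hUd) hU0
    replace hS : ∀ v ∈ U, (∀ i ∈ S, v.2 i = 0) → v = 0 := hS
    rw [hUd] at hScard
    -- the restriction map U → (S → ℝ)
    set r : U →ₗ[ℝ] (↥S → ℝ) :=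
      { toFun := fun p => fun i => (p : ℝ × (Fin n → ℝ)).2 i.1
        map_add' := fun p q => by funext i; rfl
        map_smul' := fun c p => by funext i; rfl } with hr
    have hker : LinearMap.ker r = ⊥ := by
      rw [LinearMap.ker_eq_bot']
      intro p hp
      have : (p : ℝ × (Fin n → ℝ)) = 0 := by
        apply hS _ p.2
        intro i hi
        exact congrFun hp ⟨i, hi⟩
      exact Subtype.ext this
    have hcardS : S.card = d := by
      have h1 := LinearMap.finrank_range_add_finrank_ker r
      rw [hker, finrank_bot, add_zero, hUd] at h1
      have h2 : Module.finrank ℝ (LinearMap.range r) ≤ Module.finrank ℝ (↥S → ℝ) :=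
        Submodule.finrank_le _
      rw [Module.finrank_pi, Fintype.card_coe] at h2
      omega
    have hrange : LinearMap.range r = ⊤ := by
      apply Submodule.eq_top_of_finrank_eq
      have h1 := LinearMap.finrank_range_add_finrank_ker r
      rw [hker, finrank_bot, add_zero, hUd] at h1
      rw [h1, Module.finrank_pi, Fintype.card_coe, hcardS]
    have hsurj : ∀ w : Fin n → ℝ, ∃ p ∈ U, ∀ i ∈ S, p.2 i = w i := by
      intro w
      have : (fun i : ↥S => w i.1) ∈ LinearMap.range r := hrange ▸ Submodule.mem_top
      obtain ⟨p, hp⟩ := this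
      exact ⟨p.1, p.2, fun i hi => congrFun hp ⟨i, hi⟩⟩
    -- injection on the zero set
    have hinj : Set.InjOn (fun (x : Fin n → Bool) => (fun i : ↥(Sᶜ) => x i.1)) ↑F := by
      intro x hx y hy hf
      rw [hF, Finset.coe_filter] at hx hy
      have hPx : P x := hx.2
      have hPy : P y := hy.2
      set w : Fin n → ℝ := fun i => pm x i - pm y i with hw
      have hwc : ∀ i ∉ S, w i = 0 := by
        intro i hi
        have : x i = y i := congrFun hf ⟨i, Finset.mem_compl.mpr hi⟩
        simp [hw, pm, this]
      have hzero : ∀ q ∈ U, ∑ i, q.2 i * w i = 0 := by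
        intro q hq
        have hqW : psi n q ∈ W := hq
        have h1 := hPx _ hqW
        have h2 := hPy _ hqW
        simp only [psi, LinearMap.coe_mk, AddHom.coe_mk] at h1 h2
        have : ∑ i, q.2 i * w i = (∑ i, q.2 i * pm x i) - (∑ i, q.2 i * pm y i) := by
          rw [← Finset.sum_sub_distrib]
          exact Finset.sum_congr rfl fun i _ => by rw [hw]; ring
        rw [this]
        linarith
      obtain ⟨p, hpU, hpw⟩ := hsurj w
      have hsum0 : ∑ i ∈ S, w i * w i = 0 := by
        have h1 := hzero p hpU
        have h2 : ∑ i ∈ S, p.2 i * w i = ∑ i, p.2 i * w i :=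
          Finset.sum_subset (Finset.subset_univ S)
            (fun i _ hi => by rw [hwc i hi, mul_zero])
        have h3 : ∑ i ∈ S, w i * w i = ∑ i ∈ S, p.2 i * w i :=
          Finset.sum_congr rfl fun i hi => by rw [hpw i hi]
        rw [h3, h2, h1]
      have hwS : ∀ i ∈ S, w i = 0 := by
        intro i hi
        have := (Finset.sum_eq_zero_iff_of_nonneg
          (fun i _ => mul_self_nonneg (w i))).mp hsum0 i hi
        exact mul_self_eq_zero.mp this
      have : pm x = pm y := by
        funext i
        by_cases hi : i ∈ S
        · have := hwS i hi; rw [hw] at this; simp at this; linarith [this]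
        · have := hwc i hi; rw [hw] at this; simp at this; linarith [this]
      exact pm_inj this
    have hcount : F.card ≤ 2 ^ (n - d) := by
      calc F.card ≤ (Finset.univ : Finset (↥(Sᶜ) → Bool)).card :=
            Finset.card_le_card_of_injOn _ (fun a _ => Finset.mem_univ _) hinj
        _ = 2 ^ (n - d) := by
            rw [Finset.card_univ]
            simp [Fintype.card_fun, Finset.card_compl, hcardS]
    have hdn : d ≤ n := by
      rw [← hcardS]
      simpa using Finset.card_le_univ S
    unfold probOf
    rw [← hF]
    have hsplit : (2:ℝ) ^ n = 2 ^ (n - d) * 2 ^ d := by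
      rw [← pow_add]; congr 1; omega
    rw [div_le_iff₀ (by positivity)]
    calc (F.card : ℝ) ≤ 2 ^ (n - d) := by exact_mod_cast hcount
      _ = (2:ℝ) ^ (-(d : ℤ)) * 2 ^ n := by
          rw [hsplit, zpow_neg, zpow_natCast]
          field_simp
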